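/- arXiv:2508.18668 — 2 statements merged into one kernel-verified Lean document; each statement's English description precedes it below -/
import Mathlib

section
/- Fix a real number α ≠ 0 and integer n ≥ 1. Define S_α(n,k) = (1/(α^k k!)) Σ_{j=0}^{k} (−1)^j binom(k,j) (−jα)_n for 1 ≤ k ≤ n, where (y)_n = y(y+1)⋯(y+n−1). Then for every real x: (x)_n = Σ_{k=1}^n S_α(n,k) ∏_{i=0}^{k−1} (x + iα). -/
/-!
Up to the factor `(-α)^k k!`, `S_α(n,k)` is the `k`-th forward difference with step `-α` of the
rising factorial `(y)_n` at `y = 0`. The right-hand side is therefore the Newton forward-difference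
interpolant of the degree-`n` polynomial `(x)_n` on the nodes `0, -α, …, -nα`: by the
Gregory–Newton formula it agrees with `(x)_n` at these `n + 1` distinct nodes, hence everywhere.
-/

open Finset Polynomial
open scoped Nat

/-- generalized Stirling number S_α(n,k) of Pitman -/
noncomputable def genStirling (α : ℝ) (n k : ℕ) : ℝ :=
  (1 / (α ^ k * (Nat.factorial k : ℝ))) *
    ∑ j ∈ Finset.range (k + 1),
      (-1 : ℝ) ^ j * (Nat.choose k j : ℝ) * ∏ i ∈ Finset.range n, (-(j : ℝ) * α + i)

lemma prod_range_mul_sub_mul {R : Type*} [CommRing R] (h : R) (m k : ℕ) :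
    ∏ i ∈ range k, (m * h - i * h) = h ^ k * m.descFactorial k := by
  simp_rw [← sub_mul, prod_mul_distrib, prod_const, card_range, mul_comm,
    ← descPochhammer_eval_eq_prod_range, descPochhammer_eval_eq_descFactorial]

theorem shift_eq_sum_fwdDiff_iter_mul_prod {K : Type*} [Field K] [CharZero K] {h : K}
    (hh : h ≠ 0) (f : K → K) {m n : ℕ} (hmn : m ≤ n) :
    f (m * h) = ∑ k ∈ range (n + 1),
      (fwdDiff h)^[k] f 0 / (h ^ k * k !) * ∏ i ∈ range k, (m * h - i * h) := by
  have term (k : ℕ) : (fwdDiff h)^[k] f 0 / (h ^ k * k !) * ∏ i ∈ range k, (m * h - i * h)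
      = m.choose k • (fwdDiff h)^[k] f 0 := by
    rw [prod_range_mul_sub_mul, Nat.descFactorial_eq_factorial_mul_choose, nsmul_eq_mul]
    have : (k ! : K) ≠ 0 := Nat.cast_ne_zero.2 k.factorial_ne_zero
    push_cast
    field_simp
  simp_rw [term]
  rw [← sum_subset (range_subset_range.2 (Nat.succ_le_succ hmn)), ← shift_eq_sum_fwdDiff_iter,
    zero_add, nsmul_eq_mul]
  intro k _ hk
  rw [Nat.choose_eq_zero_of_lt (by simpa using hk), zero_smul]

theorem Polynomial.eq_sum_fwdDiff_iter_mul_prod {K : Type*} [Field K] [CharZero K] {h : K}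
    (hh : h ≠ 0) {p : K[X]} {n : ℕ} (hp : p.natDegree ≤ n) :
    p = ∑ k ∈ range (n + 1),
      C ((fwdDiff h)^[k] p.eval 0 / (h ^ k * k !)) * ∏ i ∈ range k, (X - C (i * h)) := by
  refine eq_of_natDegree_lt_card_of_eval_eq _ _ (f := fun m : Fin (n + 1) => (m : K) * h)
    (fun a b hab => Fin.ext (by exact_mod_cast mul_right_cancel₀ hh hab)) (fun m => ?_) ?_
  · simp only [eval_finsetSum, eval_mul, eval_C, eval_prod, eval_sub, eval_X]
    exact shift_eq_sum_fwdDiff_iter_mul_prod hh p.eval (Nat.lt_succ_iff.1 m.2)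
  · rw [Fintype.card_fin, Nat.lt_succ_iff, max_le_iff]
    refine ⟨hp, ?_⟩
    refine natDegree_sum_le_of_forall_le _ _ fun k hk => (natDegree_C_mul_le _ _).trans ?_
    rw [natDegree_finsetProd_X_sub_C_eq_card, card_range]
    exact Nat.lt_succ_iff.1 (mem_range.1 hk)

lemma genStirling_eq_fwdDiff_iter (α : ℝ) (n k : ℕ) :
    genStirling α n k =
      (fwdDiff (-α))^[k] (fun y => ∏ i ∈ range n, (y + i)) 0 / ((-α) ^ k * k !) := by
  have sign {j : ℕ} (hj : j ≤ k) : (-1 : ℝ) ^ (k - j) = (-1) ^ k * (-1) ^ j := by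
    obtain ⟨l, rfl⟩ := Nat.exists_eq_add_of_le hj
    rw [Nat.add_sub_cancel_left, pow_add, mul_right_comm, ← pow_add, Even.neg_one_pow ⟨j, rfl⟩,
      one_mul]
  have hsum : ∑ j ∈ range (k + 1), ((-1 : ℤ) ^ (k - j) * (k.choose j)) •
        ∏ i ∈ range n, (0 + j • -α + i) =
      (-1) ^ k * ∑ j ∈ range (k + 1), (-1) ^ j * (k.choose j : ℝ) * ∏ i ∈ range n, (-j * α + i) := by
    rw [mul_sum]
    refine sum_congr rfl fun j hj => ?_
    rw [zsmul_eq_mul, Int.cast_mul, Int.cast_pow, Int.cast_neg, Int.cast_one, Int.cast_natCast,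
      sign (Nat.lt_succ_iff.1 (mem_range.1 hj))]
    simp only [nsmul_eq_mul, zero_add, mul_neg, neg_mul, mul_assoc]
  rw [fwdDiff_iter_eq_sum_shift, hsum, neg_pow α, mul_assoc, mul_div_mul_left _ _ (by simp),
    genStirling, one_div_mul_eq_div]

lemma genStirling_zero_right (α : ℝ) {n : ℕ} (hn : 0 < n) : genStirling α n 0 = 0 := by
  simpa [genStirling] using prod_eq_zero (mem_range.2 hn) (Nat.cast_zero (R := ℝ))

/-- connection-coefficient identity for generalized Stirling numbers:
(x)_n = Σ_{k=1}^n S_α(n,k) ∏_{i=0}^{k−1}(x + iα), where (x)_n = ∏_{i=0}^{n-1}(x+i). -/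
theorem genStirling_connection (α : ℝ) (hα : α ≠ 0) (n : ℕ) (hn : 1 ≤ n) (x : ℝ) :
    (∏ i ∈ Finset.range n, (x + i))
      = ∑ k ∈ Finset.Icc 1 n,
          genStirling α n k * ∏ i ∈ Finset.range k, (x + i * α) := by
  set p : ℝ[X] := ∏ i ∈ range n, (X - C (-(i : ℝ)))
  have hp : p.natDegree ≤ n := by rw [natDegree_finsetProd_X_sub_C_eq_card, card_range]
  have hpeval (y : ℝ) : p.eval y = ∏ i ∈ range n, (y + i) := by simp [p, eval_prod]
  have newton := congr_arg (eval x) (eq_sum_fwdDiff_iter_mul_prod (neg_ne_zero.2 hα) hp)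
  simp only [eval_finsetSum, eval_mul, eval_C, eval_prod, eval_sub, eval_X, hpeval,
    ← genStirling_eq_fwdDiff_iter, mul_neg, sub_neg_eq_add] at newton
  rw [newton, range_eq_Ico, sum_eq_sum_Ico_succ_bot (by omega), genStirling_zero_right α hn,
    zero_mul, zero_add, zero_add, Ico_add_one_right_eq_Icc]
end

section
/- Fix a real α ≠ 0 and integer n ≥ 1, and let S_α(n,k) = (1/(α^k k!)) Σ_{j=0}^{k} (−1)^j binom(k,j)(−jα)_n. Then for every real θ: Σ_{k=1}^n (∏_{i=1}^{k−1}(θ + iα)) S_α(n,k) = (θ+1)_{n−1}, where (y)_m is the rising factorial and the empty product is 1. -/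
/-!
Up to the factor `(-α)^k k!`, `S_α(n, k)` is the `k`-th forward difference with step `-α` of the
rising factorial `(x)_n` at `0`. Newton's forward-difference formula therefore gives the connection
identity `(x)_n = ∑_k S_α(n, k) ∏_{i<k} (x + iα)` at every grid point `x = -mα`, the sum stopping
at `k = n` because `(x)_n` has degree `n`. The grid is infinite, so the identity holds for
polynomials in `x`. Since `S_α(n, 0) = 0` for `n ≥ 1` and `(x)_n = x (x + 1)_{n-1}`, both sides
are divisible by `x`; cancelling it and evaluating at `θ` gives the theorem.
-/

open Finset

open Polynomial fwdDiff Nat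

theorem Polynomial.fwdDiff_iter_eval_eq_zero_of_natDegree_lt {R : Type*} [CommRing R] (h : R)
    {P : R[X]} {n : ℕ} (hP : P.natDegree < n) : Δ_[h] ^[n] P.eval = 0 := by
  funext y
  have hQ : (P.comp (C h * X + C y)).natDegree < n := by
    refine (natDegree_comp_le.trans ?_).trans_lt hP
    exact (Nat.mul_le_mul_left _ natDegree_linear_le).trans_eq (mul_one _)
  have := congr_fun (fwdDiff_iter_eq_zero_of_degree_lt hQ) 0
  rw [fwdDiff_iter_eq_sum_shift] at this ⊢
  simpa only [eval_comp, eval_add, eval_mul, eval_C, eval_X, zero_add, nsmul_eq_mul, mul_one,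
    Pi.zero_apply, add_zero, add_comm, mul_comm] using this

theorem prod_range_neg_mul_add_mul {R : Type*} [CommRing R] (α : R) (m k : ℕ) :
    ∏ i ∈ range k, (-(m * α) + i * α) = (-α) ^ k * k ! * m.choose k := by
  have hdesc : ∏ i ∈ range k, ((m : R) - i) = k ! * m.choose k := by
    rw [← descPochhammer_eval_eq_prod_range, descPochhammer_eval_eq_descFactorial,
      descFactorial_eq_factorial_mul_choose, cast_mul]
  calc ∏ i ∈ range k, (-(m * α) + i * α) = ∏ i ∈ range k, (-α * (m - i)) :=
        prod_congr rfl fun i _ => by ring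
    _ = (-α) ^ k * k ! * m.choose k := by
        rw [prod_mul_distrib, prod_const, card_range, hdesc, mul_assoc]

section

variable {α : ℝ}

theorem fwdDiff_iter_rising_eq_genStirling (hα : α ≠ 0) (n k : ℕ) :
    Δ_[-α] ^[k] (fun x : ℝ => ∏ i ∈ range n, (x + i)) 0 = (-α) ^ k * k ! * genStirling α n k := by
  rw [fwdDiff_iter_eq_sum_shift, genStirling, ← mul_assoc, mul_sum]
  have hscale : (-α) ^ k * k ! * (1 / (α ^ k * k !)) = (-1 : ℝ) ^ k := by
    field_simp; rw [neg_pow, mul_comm]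
  refine sum_congr rfl fun j hj => ?_
  have hsign : (-1 : ℝ) ^ (k - j) = (-1) ^ k * (-1) ^ j := by
    rw [← pow_sub_mul_pow (-1 : ℝ) (Nat.lt_succ_iff.mp (mem_range.mp hj)), mul_assoc, ← pow_add,
      Even.neg_one_pow ⟨j, rfl⟩, mul_one]
  simp only [zsmul_eq_mul, nsmul_eq_mul, zero_add]
  push_cast
  rw [hsign, hscale]
  simp only [mul_neg, neg_mul, mul_comm (j : ℝ) α]
  ring

theorem genStirling_eq_zero_of_lt (hα : α ≠ 0) {n k : ℕ} (h : n < k) : genStirling α n k = 0 := by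
  have hdeg : (∏ i ∈ range n, (X + C (i : ℝ))).natDegree < k := by
    rw [natDegree_prod_of_monic _ _ fun i _ => monic_X_add_C _]
    simpa only [natDegree_X_add_C, sum_const, card_range, smul_eq_mul, mul_one] using h
  have hzero := congr_fun (fwdDiff_iter_eval_eq_zero_of_natDegree_lt (-α) hdeg) 0
  simp only [eval_prod, eval_add, eval_X, eval_C, Pi.zero_apply] at hzero
  rw [fwdDiff_iter_rising_eq_genStirling hα] at hzero
  simpa [hα, factorial_ne_zero] using hzero

theorem genStirling_succ_zero (n : ℕ) : genStirling α (n + 1) 0 = 0 := by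
  simp [genStirling, prod_range_succ']

theorem rising_eq_sum_genStirling_mul_of_nat (hα : α ≠ 0) (n m : ℕ) :
    ∏ i ∈ range n, (-(m * α) + i) =
      ∑ k ∈ range (n + 1), genStirling α n k * ∏ i ∈ range k, (-(m * α) + i * α) := by
  set T : ℕ → ℝ := fun k => genStirling α n k * ∏ i ∈ range k, (-(m * α) + i * α)
  have hnewton := shift_eq_sum_fwdDiff_iter (-α) (fun x : ℝ => ∏ i ∈ range n, (x + i)) m 0
  have hterm : ∀ k, m.choose k • Δ_[-α] ^[k] (fun x : ℝ => ∏ i ∈ range n, (x + i)) 0 = T k := by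
    intro k
    simp only [T, fwdDiff_iter_rising_eq_genStirling hα, prod_range_neg_mul_add_mul, nsmul_eq_mul]
    ring
  have hT : ∀ k ≥ min n m + 1, T k = 0 := by
    intro k hk
    rcases min_lt_iff.mp (Nat.succ_le_iff.mp hk) with hk | hk
    · simp [T, genStirling_eq_zero_of_lt hα hk]
    · simp [T, prod_range_neg_mul_add_mul, choose_eq_zero_of_lt hk]
  simp only [hterm, zero_add, nsmul_eq_mul, ← neg_mul_eq_mul_neg] at hnewton
  rw [hnewton]
  exact (eventually_constant_sum hT (by omega)).trans (eventually_constant_sum hT (by omega)).symm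

theorem rising_eq_sum_genStirling_mul (hα : α ≠ 0) (n : ℕ) :
    ∏ i ∈ range n, (X + C (i : ℝ)) =
      ∑ k ∈ range (n + 1), C (genStirling α n k) * ∏ i ∈ range k, (X + C (i * α)) := by
  refine eq_of_infinite_eval_eq _ _ (Set.Infinite.mono ?_ (Set.infinite_range_of_injective
    (f := fun m : ℕ => -(m * α)) fun a b hab => ?_))
  · rintro _ ⟨m, rfl⟩
    simpa [eval_prod, eval_finsetSum] using rising_eq_sum_genStirling_mul_of_nat hα n m
  · simpa [hα] using hab

theorem shifted_rising_eq_sum_genStirling_mul (hα : α ≠ 0) (n : ℕ) :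
    ∏ i ∈ range n, (X + 1 + C (i : ℝ)) =
      ∑ k ∈ range (n + 1),
        (∏ i ∈ range k, (X + C ((i + 1) * α))) * C (genStirling α (n + 1) (k + 1)) := by
  refine mul_right_cancel₀ (X_ne_zero (R := ℝ)) ?_
  calc (∏ i ∈ range n, (X + 1 + C (i : ℝ))) * X = ∏ i ∈ range (n + 1), (X + C (i : ℝ)) := by
        rw [prod_range_succ']
        simp only [cast_add, cast_one, C_add, C_1, cast_zero, C_0, add_zero]
        ring_nf
    _ = _ := rising_eq_sum_genStirling_mul hα (n + 1)
    _ = _ := by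
        rw [sum_range_succ', genStirling_succ_zero, sum_mul]
        simp only [prod_range_succ', cast_add, cast_one, cast_zero, zero_mul, C_0, add_zero]
        exact sum_congr rfl fun _ _ => by ring

end

/-- Σ_{k=1}^n (∏_{i=1}^{k−1}(θ+iα)) S_α(n,k) = (θ+1)_{n−1}
(the PD(α,θ) block-count pmf sums to one). -/
theorem genStirling_block_count_normalization
    (α : ℝ) (hα : α ≠ 0) (n : ℕ) (hn : 1 ≤ n) (θ : ℝ) :
    ∑ k ∈ Finset.Icc 1 n,
        (∏ i ∈ Finset.range (k - 1), (θ + (i + 1) * α)) * genStirling α n k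
      = ∏ i ∈ Finset.range (n - 1), (θ + 1 + i) := by
  obtain ⟨n, rfl⟩ := Nat.exists_eq_add_of_le' hn
  have h := congr_arg (eval θ) (shifted_rising_eq_sum_genStirling_mul hα n)
  simp only [eval_prod, eval_finsetSum, eval_mul, eval_add, eval_X, eval_C, eval_one] at h
  rw [← Ico_add_one_right_eq_Icc, sum_Ico_eq_sum_range, add_tsub_cancel_right,
    add_tsub_cancel_right, h]
  refine sum_congr rfl fun k _ => ?_
  rw [add_comm 1 k, add_tsub_cancel_right]
end
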